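/- arXiv:2406.17270 — 2 statements merged into one kernel-verified Lean document; each statement's English description precedes it below -/
import Mathlib

section
/- Let A = A⁰ ⊕ A¹ be a finite-dimensional associative ℤ₂-graded algebra over a field F of characteristic zero, and write A⁰ = S ⊕ J where S is a semisimple subalgebra and J = J(A⁰) is the Jacobson radical of A⁰. Then for any m ∈ ℕ, G_m(A) = S + (J + G_m*(A)), and N := J ⊗ 1 + G_m*(A) equals the Jacobson radical of G_m(A). -/
open scoped TensorProduct

noncomputable section

variable (F : Type*) [Field F]

/-- Grassmann (exterior) algebra on generators indexed by `ι`. -/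
abbrev Grass (ι : Type*) := ExteriorAlgebra F (ι →₀ F)

/-- The parity (ℤ₂) grading of the Grassmann algebra. -/
def grassPart (ι : Type*) (i : ZMod 2) : Submodule F (Grass F ι) :=
  CliffordAlgebra.evenOdd (0 : QuadraticForm F (ι →₀ F)) i

/-- The augmentation ideal of the Grassmann algebra: elements with zero constant term. -/
def grassStar (ι : Type*) : Submodule F (Grass F ι) :=
  LinearMap.ker (ExteriorAlgebra.algebraMapInv (M := ι →₀ F)).toLinearMap

/-- The image of `p ⊗ q` inside `A ⊗[F] B`. -/
def tensSub {A B : Type*} [Ring A] [Ring B] [Algebra F A] [Algebra F B]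
    (p : Submodule F A) (q : Submodule F B) : Submodule F (A ⊗[F] B) :=
  LinearMap.range (TensorProduct.map p.subtype q.subtype)

/-- The Grassmann envelope `A⁰ ⊗ G⁰ ⊕ A¹ ⊗ G¹` of a ℤ₂-graded algebra. -/
def grassEnv (A : Type*) [Ring A] [Algebra F A] (𝒜 : ZMod 2 → Submodule F A)
    (ι : Type*) : Submodule F (A ⊗[F] Grass F ι) :=
  tensSub F (𝒜 0) (grassPart F ι 0) ⊔ tensSub F (𝒜 1) (grassPart F ι 1)

/-- The Grassmann envelope without constant terms `(G*)⁰ ⊗ A⁰ ⊕ (G*)¹ ⊗ A¹`. -/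
def grassEnvStar (A : Type*) [Ring A] [Algebra F A] (𝒜 : ZMod 2 → Submodule F A)
    (ι : Type*) : Submodule F (A ⊗[F] Grass F ι) :=
  tensSub F (𝒜 0) (grassStar F ι ⊓ grassPart F ι 0) ⊔
    tensSub F (𝒜 1) (grassStar F ι ⊓ grassPart F ι 1)


/-!
The augmentation `ε : G → F` induces an algebra map `π : A ⊗ G → A`, split by `a ↦ a ⊗ 1`.
On the envelope `π` takes values in `A⁰`, and `x - π x ⊗ 1` lies in `G*(A)`; hence
`G(A) = A⁰ ⊗ 1 + G*(A)` and `N = G(A) ∩ π⁻¹(J)`. As the preimage of an ideal, `N` is an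
ideal of `G(A)`. It is nilpotent because `π(N) ⊆ J` is nilpotent and `ker π = A ⊗ G*` is
nilpotent: `G*` lies in the ideal generated by the `m`-dimensional space of generators,
whose `(m+1)`-st power vanishes. Conversely, `π` maps a nilpotent ideal of `G(A)` onto a
nilpotent ideal of `A⁰ = π(G(A))`, which therefore lies in `J`.
-/

section TensSub

variable {F} {A B : Type*} [Ring A] [Ring B] [Algebra F A] [Algebra F B]

theorem tmul_mem_tensSub {p : Submodule F A} {q : Submodule F B} {a : A} {b : B}
    (ha : a ∈ p) (hb : b ∈ q) : a ⊗ₜ[F] b ∈ tensSub F p q :=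
  ⟨⟨a, ha⟩ ⊗ₜ ⟨b, hb⟩, rfl⟩

theorem tensSub_le {p : Submodule F A} {q : Submodule F B} {W : Submodule F (A ⊗[F] B)}
    (h : ∀ a ∈ p, ∀ b ∈ q, a ⊗ₜ[F] b ∈ W) : tensSub F p q ≤ W := by
  rw [tensSub, TensorProduct.range_map_eq_span_tmul, Submodule.span_le]
  rintro _ ⟨a, b, rfl⟩
  exact h a a.2 b b.2

theorem tensSub_mono {p p' : Submodule F A} {q q' : Submodule F B} (hp : p ≤ p') (hq : q ≤ q') :
    tensSub F p q ≤ tensSub F p' q' :=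
  tensSub_le fun _ ha _ hb => tmul_mem_tensSub (hp ha) (hq hb)

theorem tensSub_top : tensSub F (⊤ : Submodule F A) (⊤ : Submodule F B) = ⊤ :=
  LinearMap.range_eq_top.2 <| TensorProduct.map_surjective
    (fun a => ⟨⟨a, trivial⟩, rfl⟩) (fun b => ⟨⟨b, trivial⟩, rfl⟩)

theorem tensSub_bot_right (p : Submodule F A) : tensSub F p (⊥ : Submodule F B) = ⊥ :=
  eq_bot_iff.2 <| tensSub_le fun a _ b hb => by
    rw [(Submodule.mem_bot F).1 hb, TensorProduct.tmul_zero]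
    exact zero_mem _

theorem tensSub_mul_le {p p' : Submodule F A} {q q' : Submodule F B} :
    tensSub F p q * tensSub F p' q' ≤ tensSub F (p * p') (q * q') := by
  rw [tensSub, TensorProduct.range_map_eq_span_tmul, tensSub,
    TensorProduct.range_map_eq_span_tmul, Submodule.span_mul_span, Submodule.span_le]
  rintro _ ⟨_, ⟨a, b, rfl⟩, _, ⟨c, d, rfl⟩, rfl⟩
  dsimp only
  rw [Algebra.TensorProduct.tmul_mul_tmul]
  exact tmul_mem_tensSub (Submodule.mul_mem_mul a.2 c.2) (Submodule.mul_mem_mul b.2 d.2)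

theorem tensSub_pow_le (p : Submodule F A) (q : Submodule F B) :
    ∀ n : ℕ, tensSub F p q ^ n ≤ tensSub F (p ^ n) (q ^ n)
  | 0 => by
    rw [pow_zero, pow_zero, pow_zero, Submodule.one_le, Algebra.TensorProduct.one_def]
    exact tmul_mem_tensSub (Submodule.one_le.1 le_rfl) (Submodule.one_le.1 le_rfl)
  | n + 1 => by
    rw [pow_succ, pow_succ, pow_succ]
    exact (mul_le_mul' (tensSub_pow_le p q n) le_rfl).trans tensSub_mul_le

end TensSub

namespace CliffordAlgebra

variable {R M : Type*} [CommRing R] [AddCommGroup M] [Module R M] (Q : QuadraticForm R M)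

theorem top_mul_range_ι : ⊤ * LinearMap.range (ι Q) = LinearMap.range (ι Q) * ⊤ := by
  rw [← iSup_ι_range_eq_top, Submodule.iSup_mul, Submodule.mul_iSup]
  congr 1 with n : 1
  rw [← pow_succ, pow_succ']

theorem range_ι_mul_top_pow_le (n : ℕ) :
    (LinearMap.range (ι Q) * ⊤) ^ n ≤ LinearMap.range (ι Q) ^ n * ⊤ := by
  induction n with
  | zero => simp
  | succ n ih =>
    calc (LinearMap.range (ι Q) * ⊤) ^ (n + 1)
        ≤ LinearMap.range (ι Q) ^ n * ⊤ * (LinearMap.range (ι Q) * ⊤) :=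
          pow_succ (LinearMap.range (ι Q) * ⊤) n ▸ mul_le_mul' ih le_rfl
      _ = LinearMap.range (ι Q) ^ n * (⊤ * LinearMap.range (ι Q)) * ⊤ := by
          simp only [mul_assoc]
      _ ≤ LinearMap.range (ι Q) ^ (n + 1) * ⊤ := by
          rw [top_mul_range_ι, ← mul_assoc, ← pow_succ, mul_assoc]
          exact mul_le_mul' le_rfl le_top

end CliffordAlgebra

namespace ExteriorAlgebra

variable {R M : Type*} [CommRing R] [AddCommGroup M] [Module R M]

theorem algebraMapInv_ι (v : M) : algebraMapInv (ι R v) = 0 := by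
  simp [algebraMapInv]

theorem sub_algebraMap_algebraMapInv_mem_range_ι_mul_top (x : ExteriorAlgebra R M) :
    x - algebraMap R _ (algebraMapInv x) ∈ LinearMap.range (ι R) * ⊤ := by
  induction x using ExteriorAlgebra.induction with
  | algebraMap r => simp [algebraMap_leftInverse M r]
  | ι v =>
    rw [algebraMapInv_ι, map_zero, sub_zero, ← mul_one (ι R v)]
    exact Submodule.mul_mem_mul (LinearMap.mem_range_self _ v) Submodule.mem_top
  | mul a b ha hb =>
    have hab : a * b - algebraMap R _ (algebraMapInv (a * b)) =
        (a - algebraMap R _ (algebraMapInv a)) * b +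
          algebraMapInv a • (b - algebraMap R _ (algebraMapInv b)) := by
      rw [map_mul, map_mul, sub_mul, smul_sub, Algebra.smul_def, Algebra.smul_def,
        ← Algebra.commutes]
      abel
    rw [hab]
    refine add_mem ?_ (Submodule.smul_mem _ _ hb)
    have := Submodule.mul_mem_mul ha (Submodule.mem_top (x := b))
    rw [mul_assoc] at this
    exact (mul_le_mul' le_rfl le_top : _ ≤ LinearMap.range (ι R) * ⊤) this
  | add a b ha hb =>
    rw [map_add, map_add, add_sub_add_comm]
    exact add_mem ha hb

theorem ker_algebraMapInv_le_range_ι_mul_top :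
    LinearMap.ker (algebraMapInv (R := R) (M := M)).toLinearMap ≤
      LinearMap.range (ι R) * ⊤ := fun x hx => by
  have := sub_algebraMap_algebraMapInv_mem_range_ι_mul_top x
  rwa [← AlgHom.toLinearMap_apply, LinearMap.mem_ker.1 hx, map_zero, sub_zero] at this

theorem range_ι_pow_eq_bot {K : Type*} [Field K] [Module K M] [Module.Finite K M] {n : ℕ}
    (hn : Module.finrank K M < n) : LinearMap.range (ι K (M := M)) ^ n = ⊥ := by
  rw [← Submodule.finrank_eq_zero (S := ⋀[K]^n M), exteriorPower.finrank_eq,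
    Nat.choose_eq_zero_of_lt hn]

end ExteriorAlgebra

section Grassmann

variable {F} {ι : Type*}

theorem mem_grassStar_iff {x : Grass F ι} :
    x ∈ grassStar F ι ↔ ExteriorAlgebra.algebraMapInv x = 0 := Iff.rfl

theorem grassStar_pow_eq_bot [Fintype ι] : grassStar F ι ^ (Fintype.card ι + 1) = ⊥ := by
  refine eq_bot_iff.2 <|
    (pow_le_pow_left' ExteriorAlgebra.ker_algebraMapInv_le_range_ι_mul_top _).trans <|
      (CliffordAlgebra.range_ι_mul_top_pow_le _ _).trans ?_
  rw [ExteriorAlgebra.range_ι_pow_eq_bot (by rw [Module.finrank_finsupp_self]; omega),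
    Submodule.bot_mul]

theorem grassPart_one_le_grassStar : grassPart F ι 1 ≤ grassStar F ι := by
  refine iSup_le fun ⟨n, hn⟩ => ?_
  cases n with
  | zero => simp at hn
  | succ k =>
    rw [pow_succ]
    refine Submodule.mul_le.2 fun x _ y ⟨v, hv⟩ => ?_
    rw [mem_grassStar_iff, map_mul, ← hv, ExteriorAlgebra.algebraMapInv_ι, mul_zero]

theorem one_mem_grassPart_zero : (1 : Grass F ι) ∈ grassPart F ι 0 :=
  Submodule.one_le.1 (CliffordAlgebra.one_le_evenOdd_zero _)

theorem sub_algebraMap_mem_grassStar (g : Grass F ι) :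
    g - algebraMap F _ (ExteriorAlgebra.algebraMapInv g) ∈ grassStar F ι := by
  rw [mem_grassStar_iff, map_sub, AlgHom.commutes, Algebra.algebraMap_self, RingHom.id_apply,
    sub_self]

theorem sub_algebraMap_mem_grassPart {i : ZMod 2} {g : Grass F ι} (hg : g ∈ grassPart F ι i) :
    g - algebraMap F _ (ExteriorAlgebra.algebraMapInv g) ∈ grassPart F ι i := by
  rcases (show ∀ z : ZMod 2, z = 0 ∨ z = 1 by decide) i with rfl | rfl
  · refine sub_mem hg ?_
    rw [Algebra.algebraMap_eq_smul_one]
    exact Submodule.smul_mem _ _ one_mem_grassPart_zero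
  · rwa [mem_grassStar_iff.1 (grassPart_one_le_grassStar hg), map_zero, sub_zero]

end Grassmann

namespace Submodule

variable {R A C : Type*} [CommSemiring R] [Semiring A] [Semiring C] [Algebra R A] [Algebra R C]
  (f : A →ₐ[R] C) {B : Submodule R A} {P : Submodule R C}

theorem mul_inf_comap_le (hB : B * B ≤ B) (hP : map f.toLinearMap B * P ≤ P) :
    B * (B ⊓ comap f.toLinearMap P) ≤ B ⊓ comap f.toLinearMap P := by
  refine le_inf ((mul_le_mul' le_rfl inf_le_left).trans hB) (map_le_iff_le_comap.1 ?_)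
  rw [Submodule.map_mul]
  exact (mul_le_mul' le_rfl (map_le_iff_le_comap.2 inf_le_right)).trans hP

theorem inf_comap_mul_le (hB : B * B ≤ B) (hP : P * map f.toLinearMap B ≤ P) :
    (B ⊓ comap f.toLinearMap P) * B ≤ B ⊓ comap f.toLinearMap P := by
  refine le_inf ((mul_le_mul' inf_le_left le_rfl).trans hB) (map_le_iff_le_comap.1 ?_)
  rw [Submodule.map_mul]
  exact (mul_le_mul' (map_le_iff_le_comap.2 inf_le_right) le_rfl).trans hP

theorem pow_le_ker_of_map_le {X : Submodule R A} {n : ℕ} (hX : map f.toLinearMap X ≤ P)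
    (hP : P ^ n = ⊥) : X ^ n ≤ LinearMap.ker f.toLinearMap := by
  rw [← comap_bot, ← map_le_iff_le_comap, Submodule.map_pow, ← hP]
  exact pow_le_pow_left' hX n

end Submodule

def grassAug (A : Type*) [Ring A] [Algebra F A] (ι : Type*) : A ⊗[F] Grass F ι →ₐ[F] A :=
  (Algebra.TensorProduct.rid F F A).toAlgHom.comp
    (Algebra.TensorProduct.map (AlgHom.id F A) ExteriorAlgebra.algebraMapInv)

section Augmentation

variable {F} {A : Type*} [Ring A] [Algebra F A] {ι : Type*}

theorem grassAug_tmul (a : A) (g : Grass F ι) :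
    grassAug F A ι (a ⊗ₜ g) = ExteriorAlgebra.algebraMapInv g • a := by
  simp [grassAug]

theorem grassAug_includeLeft (a : A) :
    grassAug F A ι (Algebra.TensorProduct.includeLeft (S := F) a) = a := by
  rw [Algebra.TensorProduct.includeLeft_apply, grassAug_tmul, map_one, one_smul]

theorem tmul_sub_includeLeft_grassAug (a : A) (g : Grass F ι) :
    a ⊗ₜ[F] g - Algebra.TensorProduct.includeLeft (S := F) (grassAug F A ι (a ⊗ₜ g)) =
      a ⊗ₜ (g - algebraMap F (Grass F ι) (ExteriorAlgebra.algebraMapInv g)) := by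
  rw [grassAug_tmul, Algebra.TensorProduct.includeLeft_apply, TensorProduct.smul_tmul,
    ← Algebra.algebraMap_eq_smul_one, TensorProduct.tmul_sub]

theorem sub_includeLeft_grassAug_mem {p : Submodule F A} {q r : Submodule F (Grass F ι)}
    (hqr : ∀ g ∈ q, g - algebraMap F _ (ExteriorAlgebra.algebraMapInv g) ∈ r)
    {x : A ⊗[F] Grass F ι} (hx : x ∈ tensSub F p q) :
    x - Algebra.TensorProduct.includeLeft (S := F) (grassAug F A ι x) ∈ tensSub F p r := by
  let D := LinearMap.id - (Algebra.TensorProduct.includeLeft (S := F)).toLinearMap ∘ₗ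
    (grassAug F A ι).toLinearMap
  have hD : tensSub F p q ≤ (tensSub F p r).comap D := tensSub_le fun a ha g hg => by
    simp only [Submodule.mem_comap, D, LinearMap.sub_apply, LinearMap.id_apply,
      LinearMap.comp_apply, AlgHom.toLinearMap_apply, tmul_sub_includeLeft_grassAug]
    exact tmul_mem_tensSub ha (hqr g hg)
  exact hD hx

theorem ker_grassAug_le :
    LinearMap.ker (grassAug F A ι).toLinearMap ≤ tensSub F ⊤ (grassStar F ι) := fun x hx => by
  have hx0 : grassAug F A ι x = 0 := hx
  have hxtop : x ∈ tensSub F (⊤ : Submodule F A) (⊤ : Submodule F (Grass F ι)) := by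
    rw [tensSub_top]
    exact Submodule.mem_top
  have := sub_includeLeft_grassAug_mem (fun g _ => sub_algebraMap_mem_grassStar g) hxtop
  rwa [hx0, map_zero, sub_zero] at this

theorem ker_grassAug_pow_eq_bot [Fintype ι] :
    LinearMap.ker (grassAug F A ι).toLinearMap ^ (Fintype.card ι + 1) = ⊥ := by
  refine eq_bot_iff.2 <| (pow_le_pow_left' ker_grassAug_le _).trans <|
    (tensSub_pow_le _ _ _).trans ?_
  rw [grassStar_pow_eq_bot, tensSub_bot_right]

end Augmentation

section Envelope

variable {F} {A : Type*} [Ring A] [Algebra F A] {𝒜 : ZMod 2 → Submodule F A} {ι : Type*}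

theorem tensSub_le_grassEnv (i : ZMod 2) :
    tensSub F (𝒜 i) (grassPart F ι i) ≤ grassEnv F A 𝒜 ι := by
  rcases (show ∀ z : ZMod 2, z = 0 ∨ z = 1 by decide) i with rfl | rfl
  exacts [le_sup_left, le_sup_right]

theorem map_includeLeft_le_grassEnv {J : Submodule F A} (hJ : J ≤ 𝒜 0) :
    J.map (Algebra.TensorProduct.includeLeft (S := F)).toLinearMap ≤ grassEnv F A 𝒜 ι := by
  rintro _ ⟨a, ha, rfl⟩
  exact tensSub_le_grassEnv 0 (tmul_mem_tensSub (hJ ha) one_mem_grassPart_zero)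

theorem grassEnvStar_le_grassEnv : grassEnvStar F A 𝒜 ι ≤ grassEnv F A 𝒜 ι :=
  sup_le_sup (tensSub_mono le_rfl inf_le_right) (tensSub_mono le_rfl inf_le_right)

theorem grassEnvStar_le_ker_grassAug :
    grassEnvStar F A 𝒜 ι ≤ LinearMap.ker (grassAug F A ι).toLinearMap := by
  have h (i : ZMod 2) :
      tensSub F (𝒜 i) (grassStar F ι ⊓ grassPart F ι i) ≤
        LinearMap.ker (grassAug F A ι).toLinearMap :=
    tensSub_le fun a _ g hg => by
      rw [LinearMap.mem_ker, AlgHom.toLinearMap_apply, grassAug_tmul,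
        mem_grassStar_iff.1 hg.1, zero_smul]
  exact sup_le (h 0) (h 1)

theorem sub_includeLeft_grassAug_mem_grassEnvStar {x : A ⊗[F] Grass F ι}
    (hx : x ∈ grassEnv F A 𝒜 ι) :
    x - Algebra.TensorProduct.includeLeft (S := F) (grassAug F A ι x) ∈
      grassEnvStar F A 𝒜 ι := by
  have hqr (i : ZMod 2) (g : Grass F ι) (hg : g ∈ grassPart F ι i) :
      g - algebraMap F _ (ExteriorAlgebra.algebraMapInv g) ∈
        grassStar F ι ⊓ grassPart F ι i :=
    ⟨sub_algebraMap_mem_grassStar g, sub_algebraMap_mem_grassPart hg⟩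
  obtain ⟨y, hy, z, hz, rfl⟩ := Submodule.mem_sup.1 hx
  rw [map_add, map_add, add_sub_add_comm]
  exact add_mem (Submodule.mem_sup_left (sub_includeLeft_grassAug_mem (hqr 0) hy))
    (Submodule.mem_sup_right (sub_includeLeft_grassAug_mem (hqr 1) hz))

theorem map_grassAug_grassEnv :
    (grassEnv F A 𝒜 ι).map (grassAug F A ι).toLinearMap = 𝒜 0 := by
  refine le_antisymm (Submodule.map_le_iff_le_comap.2 (sup_le ?_ ?_)) fun a ha =>
    ⟨_, map_includeLeft_le_grassEnv le_rfl ⟨a, ha, rfl⟩, grassAug_includeLeft a⟩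
  · refine tensSub_le fun a ha g _ => ?_
    rw [Submodule.mem_comap, AlgHom.toLinearMap_apply, grassAug_tmul]
    exact Submodule.smul_mem _ _ ha
  · refine tensSub_le fun a _ g hg => ?_
    rw [Submodule.mem_comap, AlgHom.toLinearMap_apply, grassAug_tmul,
      mem_grassStar_iff.1 (grassPart_one_le_grassStar hg), zero_smul]
    exact zero_mem _

theorem map_includeLeft_sup_grassEnvStar {J : Submodule F A} (hJ : J ≤ 𝒜 0) :
    J.map (Algebra.TensorProduct.includeLeft (S := F)).toLinearMap ⊔ grassEnvStar F A 𝒜 ι =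
      grassEnv F A 𝒜 ι ⊓ J.comap (grassAug F A ι).toLinearMap := by
  refine le_antisymm (sup_le (le_inf (map_includeLeft_le_grassEnv hJ) ?_)
    (le_inf grassEnvStar_le_grassEnv fun x hx => ?_)) fun x ⟨hx, hxJ⟩ => ?_
  · rintro _ ⟨a, ha, rfl⟩
    rwa [Submodule.mem_comap, AlgHom.toLinearMap_apply, AlgHom.toLinearMap_apply,
      grassAug_includeLeft]
  · rw [Submodule.mem_comap, LinearMap.mem_ker.1 (grassEnvStar_le_ker_grassAug hx)]
    exact zero_mem _
  · exact Submodule.mem_sup.2 ⟨_, ⟨_, hxJ, rfl⟩, _,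
      sub_includeLeft_grassAug_mem_grassEnvStar hx, add_sub_cancel _ _⟩

theorem grassEnv_eq_map_includeLeft_sup_grassEnvStar :
    grassEnv F A 𝒜 ι =
      (𝒜 0).map (Algebra.TensorProduct.includeLeft (S := F)).toLinearMap ⊔
        grassEnvStar F A 𝒜 ι := by
  rw [map_includeLeft_sup_grassEnvStar le_rfl, left_eq_inf, ← Submodule.map_le_iff_le_comap,
    map_grassAug_grassEnv]

variable [SetLike.GradedMonoid 𝒜]

theorem grassEnv_mul_le : grassEnv F A 𝒜 ι * grassEnv F A 𝒜 ι ≤ grassEnv F A 𝒜 ι := by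
  have h (i j : ZMod 2) : tensSub F (𝒜 i) (grassPart F ι i) *
      tensSub F (𝒜 j) (grassPart F ι j) ≤ grassEnv F A 𝒜 ι :=
    tensSub_mul_le.trans <| (tensSub_mono
      (Submodule.mul_le.2 fun _ ha _ hb => SetLike.mul_mem_graded ha hb)
      (CliffordAlgebra.evenOdd_mul_le _ i j)).trans (tensSub_le_grassEnv (i + j))
  rw [grassEnv, Submodule.sup_mul, Submodule.mul_sup, Submodule.mul_sup]
  exact sup_le (sup_le (h 0 0) (h 0 1)) (sup_le (h 1 0) (h 1 1))

end Envelope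

theorem grassEnv_wedderburnMalcev
    (A : Type*) [Ring A] [Algebra F A]
    (𝒜 : ZMod 2 → Submodule F A) [GradedAlgebra 𝒜]
    (S : Subalgebra F A) (J : Submodule F A)
    -- `A⁰ = S ⊕ J` :
    (hJA : J ≤ 𝒜 0)
    (hSJ : S.toSubmodule ⊔ J = 𝒜 0)
    -- `J` is the Jacobson radical of `A⁰`, i.e. its largest nilpotent ideal:
    (hJl : 𝒜 0 * J ≤ J) (hJr : J * 𝒜 0 ≤ J) (hJnil : ∃ r : ℕ, J ^ r = ⊥)
    (hJmax : ∀ I : Submodule F A, I ≤ 𝒜 0 → 𝒜 0 * I ≤ I → I * 𝒜 0 ≤ I →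
      (∃ r : ℕ, I ^ r = ⊥) → I ≤ J)
    (m : ℕ) :
    -- notation: `S ⊗ 1`, `J ⊗ 1` and `N = J ⊗ 1 + G_m*(A)` inside `A ⊗ G_m`
    letI ι₁ : A →ₗ[F] A ⊗[F] Grass F (Fin m) :=
      (Algebra.TensorProduct.includeLeft (S := F)).toLinearMap
    letI N : Submodule F (A ⊗[F] Grass F (Fin m)) :=
      Submodule.map ι₁ J ⊔ grassEnvStar F A 𝒜 (Fin m)
    -- `G_m(A) = S + (J + G_m*(A))` :
    grassEnv F A 𝒜 (Fin m) = Submodule.map ι₁ S.toSubmodule ⊔ N ∧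
    -- `N` is an ideal of `G_m(A)` ...
    N ≤ grassEnv F A 𝒜 (Fin m) ∧
    grassEnv F A 𝒜 (Fin m) * N ≤ N ∧ N * grassEnv F A 𝒜 (Fin m) ≤ N ∧
    -- ... which is nilpotent ...
    (∃ r : ℕ, N ^ r = ⊥) ∧
    -- ... and is the largest such, i.e. the Jacobson radical of `G_m(A)`:
    (∀ I : Submodule F (A ⊗[F] Grass F (Fin m)), I ≤ grassEnv F A 𝒜 (Fin m) →
      grassEnv F A 𝒜 (Fin m) * I ≤ I → I * grassEnv F A 𝒜 (Fin m) ≤ I →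
      (∃ r : ℕ, I ^ r = ⊥) → I ≤ N) := by
  set π := grassAug F A (Fin m)
  set N := J.map (Algebra.TensorProduct.includeLeft (S := F)).toLinearMap ⊔
    grassEnvStar F A 𝒜 (Fin m)
  have hπ : (grassEnv F A 𝒜 (Fin m)).map π.toLinearMap = 𝒜 0 := map_grassAug_grassEnv
  have hN : N = grassEnv F A 𝒜 (Fin m) ⊓ J.comap π.toLinearMap :=
    map_includeLeft_sup_grassEnvStar hJA
  refine ⟨?_, hN ▸ inf_le_left,
    hN ▸ Submodule.mul_inf_comap_le _ grassEnv_mul_le (hπ ▸ hJl),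
    hN ▸ Submodule.inf_comap_mul_le _ grassEnv_mul_le (hπ ▸ hJr), ?_, ?_⟩
  · rw [← sup_assoc, ← Submodule.map_sup, hSJ]
    exact grassEnv_eq_map_includeLeft_sup_grassEnvStar
  · obtain ⟨r, hr⟩ := hJnil
    have hNr : N ^ r ≤ LinearMap.ker π.toLinearMap :=
      Submodule.pow_le_ker_of_map_le _ (hN ▸ Submodule.map_le_iff_le_comap.2 inf_le_right) hr
    have hker := ker_grassAug_pow_eq_bot (F := F) (A := A) (ι := Fin m)
    rw [Fintype.card_fin] at hker
    exact ⟨r * (m + 1), eq_bot_iff.2 (pow_mul N r (m + 1) ▸ hker ▸ pow_le_pow_left' hNr _)⟩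
  · rintro I hIenv hIl hIr ⟨r, hr⟩
    have hπI : I.map π.toLinearMap ≤ J := by
      refine hJmax _ (hπ ▸ Submodule.map_mono hIenv) ?_ ?_ ⟨r, ?_⟩
      · rw [← hπ, ← Submodule.map_mul]
        exact Submodule.map_mono hIl
      · rw [← hπ, ← Submodule.map_mul]
        exact Submodule.map_mono hIr
      · rw [← Submodule.map_pow, hr, Submodule.map_bot]
    rw [hN]
    exact le_inf hIenv (Submodule.map_le_iff_le_comap.1 hπI)
end
end

section
/- In the infinite-dimensional Grassmann algebra G over a field of characteristic zero, the triple commutator [x₁, x₂, x₃] := [[x₁,x₂],x₃] is an identity (i.e., [[a,b],c] = 0 for all a,b,c ∈ G), and in the Grassmann algebra G_m on m generators, with k = ⌊m/2⌋, the product of k+1 commutators [x₁,x₂][x₃,x₄]⋯[x_{2k+1},x_{2k+2}] vanishes identically. -/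
noncomputable section

open ExteriorAlgebra

set_option linter.unusedSectionVars false

open ExteriorAlgebra

section Part1

variable (F : Type*) [Field F] [CharZero F] {M : Type*} [AddCommGroup M] [Module F M]

local notation "σ" => CliffordAlgebra.involute

lemma grass_half {A : Type*} [AddCommGroup A] [Module F A] (a b : A)
    (h : (2 : F) • a = (2 : F) • b) : a = b := by
  have := congrArg (fun z => ((2 : F))⁻¹ • z) h
  simpa [smul_smul, inv_mul_cancel₀ (two_ne_zero (α := F))] using this

lemma grass_iota_mul (m : M) (y : ExteriorAlgebra F M) :
    ι F m * y = σ y * ι F m := by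
  induction y using ExteriorAlgebra.induction with
  | algebraMap r => rw [AlgHom.commutes, Algebra.commutes]
  | ι n =>
      rw [CliffordAlgebra.involute_ι, neg_mul]
      exact eq_neg_of_add_eq_zero_left (ι_add_mul_swap m n)
  | mul y₁ y₂ h₁ h₂ =>
      rw [map_mul, ← mul_assoc, h₁, mul_assoc, h₂, mul_assoc]
  | add y₁ y₂ h₁ h₂ => rw [map_add, mul_add, add_mul, h₁, h₂]

lemma grass_two_smul_mul (x : ExteriorAlgebra F M) :
    ∀ y : ExteriorAlgebra F M,
      (2 : F) • (x * y) = (y + σ y) * x + (y - σ y) * σ x := by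
  induction x using ExteriorAlgebra.induction with
  | algebraMap r =>
      intro y
      rw [AlgHom.commutes, two_smul, Algebra.commutes, add_mul, sub_mul]
      abel
  | ι n =>
      intro y
      rw [two_smul, grass_iota_mul, CliffordAlgebra.involute_ι, add_mul, sub_mul,
        mul_neg, mul_neg]
      abel
  | mul x₁ x₂ h₁ h₂ =>
      intro y
      apply grass_half F
      set u := y + σ y with hu
      set v := y - σ y with hv
      have hσu : σ u = u := by
        rw [hu, map_add, CliffordAlgebra.involute_involute, add_comm]
      have hσv : σ v = -v := by
        rw [hv, map_sub, CliffordAlgebra.involute_involute, neg_sub]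
      have k1 : (2 : F) • (x₁ * u) = (u + u) * x₁ := by
        rw [h₁ u, hσu, sub_self, zero_mul, add_zero]
      have k2 : (2 : F) • (x₁ * v) = (v + v) * σ x₁ := by
        rw [h₁ v, hσv, sub_neg_eq_add, add_neg_cancel, zero_mul, zero_add]
      calc (2 : F) • ((2 : F) • (x₁ * x₂ * y))
          = (2 : F) • (x₁ * ((2 : F) • (x₂ * y))) := by
            rw [mul_assoc, mul_smul_comm]
        _ = (2 : F) • (x₁ * (u * x₂ + v * σ x₂)) := by rw [h₂ y]
        _ = ((2 : F) • (x₁ * u)) * x₂ + ((2 : F) • (x₁ * v)) * σ x₂ := by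
            rw [mul_add, smul_add, ← mul_assoc, ← mul_assoc, smul_mul_assoc, smul_mul_assoc]
        _ = (u + u) * (x₁ * x₂) + (v + v) * (σ x₁ * σ x₂) := by
            rw [k1, k2, mul_assoc, mul_assoc]
        _ = (2 : F) • (u * (x₁ * x₂) + v * σ (x₁ * x₂)) := by
            rw [map_mul, smul_add, ← smul_mul_assoc, ← smul_mul_assoc, two_smul, two_smul]
  | add x₁ x₂ h₁ h₂ =>
      intro y
      rw [add_mul, smul_add, h₁ y, h₂ y, map_add, mul_add, mul_add]
      abel

lemma grass_comm_eq (x y : ExteriorAlgebra F M) :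
    (2 : F) • (x * y - y * x) = (y - σ y) * (σ x - x) := by
  rw [smul_sub, grass_two_smul_mul F x y, two_smul]
  simp only [add_mul, sub_mul, mul_sub]
  abel

lemma grass_triple (a b c : ExteriorAlgebra F M) :
    (a * b - b * a) * c - c * (a * b - b * a) = 0 := by
  have h1 : σ (a * b - b * a) = a * b - b * a := by
    apply grass_half F
    rw [← map_smul, grass_comm_eq, map_mul, map_sub, map_sub,
      CliffordAlgebra.involute_involute, CliffordAlgebra.involute_involute,
      show σ b - b = -(b - σ b) from (neg_sub _ _).symm,
      show a - σ a = -(σ a - a) from (neg_sub _ _).symm, neg_mul_neg]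
  have h2 := grass_comm_eq F (a * b - b * a) c
  rw [h1, sub_self, mul_zero] at h2
  apply grass_half F
  rw [h2, smul_zero]

end Part1

section Part2

variable (F : Type*) [Field F] {M : Type*} [AddCommGroup M] [Module F M]
variable [Module.Finite F M]

/-- The submodule of "degree ≥ n" elements: `⨆ i, J ^ (i + n)` with `J` the span of
the generators. -/
def grassD (n : ℕ) : Submodule F (ExteriorAlgebra F M) :=
  ⨆ i : ℕ, (Submodule.span F (Set.range (ι F : M →ₗ[F] ExteriorAlgebra F M))) ^ (i + n)

lemma grassJ_pow_le_D (i n : ℕ) :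
    (Submodule.span F (Set.range (ι F : M →ₗ[F] ExteriorAlgebra F M))) ^ (i + n) ≤ grassD F n :=
  le_iSup (fun i : ℕ => (Submodule.span F (Set.range (ι F : M →ₗ[F] ExteriorAlgebra F M))) ^ (i + n)) i

lemma grassD_mul (a b : ℕ) : grassD (M := M) F a * grassD (M := M) F b ≤ grassD (M := M) F (a + b) := by
  rw [grassD, Submodule.iSup_mul]
  apply iSup_le; intro i
  rw [grassD, Submodule.mul_iSup]
  apply iSup_le; intro j
  rw [← pow_add]
  have h : (i + a) + (j + b) = (i + j) + (a + b) := by ring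
  rw [h]
  exact grassJ_pow_le_D F (i + j) (a + b)

lemma grassD_anti {a b : ℕ} (h : a ≤ b) : grassD (M := M) F b ≤ grassD (M := M) F a := by
  apply iSup_le; intro i
  have h2 : i + b = (i + (b - a)) + a := by omega
  rw [h2]
  exact grassJ_pow_le_D F _ _

lemma grass_split (x : ExteriorAlgebra F M) :
    ∃ r : F, x - algebraMap F (ExteriorAlgebra F M) r ∈ grassD F 1 := by
  induction x using ExteriorAlgebra.induction with
  | algebraMap r => exact ⟨r, by simp⟩
  | ι v =>
      refine ⟨0, ?_⟩
      rw [map_zero, sub_zero]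
      have : ι F v ∈ (Submodule.span F (Set.range (ι F : M →ₗ[F] ExteriorAlgebra F M))) ^ (0 + 1) := by
        rw [zero_add, pow_one]
        exact Submodule.subset_span ⟨v, rfl⟩
      exact grassJ_pow_le_D F 0 1 this
  | mul x y hx hy =>
      obtain ⟨r, hr⟩ := hx
      obtain ⟨s, hs⟩ := hy
      refine ⟨r * s, ?_⟩
      have key : x * y - algebraMap F (ExteriorAlgebra F M) (r * s) =
          r • (y - algebraMap F _ s) + s • (x - algebraMap F _ r) +
            (x - algebraMap F _ r) * (y - algebraMap F _ s) := by
        simp only [Algebra.smul_def, mul_sub, sub_mul, map_mul]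
        rw [← Algebra.commutes s x, ← map_mul, ← map_mul, mul_comm s r]
        abel
      rw [key]
      refine add_mem (add_mem (Submodule.smul_mem _ _ hs) (Submodule.smul_mem _ _ hr)) ?_
      refine grassD_anti F (by omega : 1 ≤ 2) ?_
      exact grassD_mul F 1 1 (Submodule.mul_mem_mul hr hs)
  | add x y hx hy =>
      obtain ⟨r, hr⟩ := hx
      obtain ⟨s, hs⟩ := hy
      refine ⟨r + s, ?_⟩
      have : x + y - algebraMap F (ExteriorAlgebra F M) (r + s) =
          (x - algebraMap F _ r) + (y - algebraMap F _ s) := by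
        rw [map_add]; abel
      rw [this]
      exact add_mem hr hs

lemma grass_comm_mem (x y : ExteriorAlgebra F M) :
    x * y - y * x ∈ grassD F 2 := by
  obtain ⟨r, hr⟩ := grass_split F x
  obtain ⟨s, hs⟩ := grass_split F y
  have key : x * y - y * x =
      (x - algebraMap F _ r) * (y - algebraMap F _ s) -
        (y - algebraMap F _ s) * (x - algebraMap F _ r) := by
    simp only [mul_sub, sub_mul]
    rw [← Algebra.commutes s x, ← Algebra.commutes r y, ← map_mul, ← map_mul, mul_comm s r]
    abel
  rw [key]
  exact sub_mem (grassD_mul F 1 1 (Submodule.mul_mem_mul hr hs))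
    (grassD_mul F 1 1 (Submodule.mul_mem_mul hs hr))

lemma grass_J_pow_bot (m : ℕ) (hm : Module.finrank F M = m) :
    (Submodule.span F (Set.range (ι F : M →ₗ[F] ExteriorAlgebra F M))) ^ (m + 1) = ⊥ := by
  rw [Submodule.span_pow]
  rw [eq_bot_iff]
  rw [Submodule.span_le]
  rintro x hx
  rw [Set.mem_pow] at hx
  obtain ⟨f, hf⟩ := hx
  have hv : ∀ i, ∃ v : M, ι F v = (f i : ExteriorAlgebra F M) := by
    intro i
    obtain ⟨v, hv⟩ := (f i).2
    exact ⟨v, hv⟩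
  choose v hvf using hv
  have hx0 : x = ExteriorAlgebra.ιMulti F (m + 1) v := by
    rw [← hf, ExteriorAlgebra.ιMulti_apply]
    exact congrArg List.prod (congrArg List.ofFn (funext fun i => (hvf i).symm))
  have hdep : ¬ LinearIndependent F v := by
    intro h
    have := h.fintype_card_le_finrank
    rw [hm, Fintype.card_fin] at this
    omega
  rw [hx0, AlternatingMap.map_linearDependent _ v hdep]
  simp

lemma grassD_bot (m : ℕ) (hm : Module.finrank F M = m) {n : ℕ} (hn : m + 1 ≤ n) :
    grassD (M := M) F n = ⊥ := by
  rw [eq_bot_iff]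
  apply iSup_le; intro i
  have h2 : i + n = (i + (n - (m + 1))) + (m + 1) := by omega
  rw [h2, pow_add, grass_J_pow_bot F m hm, Submodule.mul_bot]

lemma grass_prod_mem (n : ℕ) (f : Fin n → ExteriorAlgebra F M)
    (hf : ∀ j, f j ∈ grassD F 2) : (List.ofFn f).prod ∈ grassD F (2 * n) := by
  induction n with
  | zero =>
      simp only [List.ofFn_zero, List.prod_nil, Nat.mul_zero]
      have h1 : (1 : ExteriorAlgebra F M) ∈
          (Submodule.span F (Set.range (ι F : M →ₗ[F] ExteriorAlgebra F M))) ^ (0 + 0) := by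
        rw [pow_zero]
        exact Submodule.one_le.mp le_rfl
      exact grassJ_pow_le_D F 0 0 h1
  | succ k ih =>
      rw [List.ofFn_succ, List.prod_cons]
      have h1 : f 0 * (List.ofFn fun i : Fin k => f i.succ).prod ∈
          grassD F 2 * grassD F (2 * k) :=
        Submodule.mul_mem_mul (hf 0) (ih _ fun j => hf _)
      have h2 := grassD_mul F 2 (2 * k) h1
      have h3 : 2 + 2 * k = 2 * (k + 1) := by ring
      rwa [h3] at h2

end Part2

variable (F : Type*) [Field F]

/-- in the infinite-dimensional Grassmann algebra `G` over a field of
characteristic zero the triple commutator `[[x₁,x₂],x₃]` vanishes identically, and in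
the Grassmann algebra `G_m` on `m` generators, with `k = ⌊m/2⌋`, any product of `k+1`
commutators `[x₁,x₂][x₃,x₄]⋯[x_{2k+1},x_{2k+2}]` vanishes identically. -/
theorem grassmann_commutator_identities [CharZero F] (m : ℕ) :
    (∀ a b c : Grass F ℕ, (a * b - b * a) * c - c * (a * b - b * a) = 0) ∧
    (∀ x y : Fin (m / 2 + 1) → Grass F (Fin m),
      (List.ofFn fun j => x j * y j - y j * x j).prod = 0) := by
  constructor
  · intro a b c
    exact grass_triple F a b c
  · intro x y
    have hrank : Module.finrank F (Fin m →₀ F) = m := by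
      rw [Module.finrank_finsupp_self, Fintype.card_fin]
    have hmem : (List.ofFn fun j => x j * y j - y j * x j).prod ∈
        grassD (M := Fin m →₀ F) F (2 * (m / 2 + 1)) :=
      grass_prod_mem F _ _ fun j => grass_comm_mem F (x j) (y j)
    rw [grassD_bot F m hrank (by omega)] at hmem
    simpa using hmem
end
end
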